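/- arXiv:1507.01424 — 2 statements merged into one kernel-verified Lean document; each statement's English description precedes it below -/
import Mathlib

section
/- Let A ⊂ ℝ^m be a nonempty compact set. Suppose f : [0,T]×ℝⁿ×A → ℝⁿ and l : [0,T]×ℝⁿ×A → ℝ are measurable in t for all (x,a) and continuous in (x,a) for all t, and for every R > 0 there exist a modulus w_R and a null set N_R such that |l(t,x,a) − l(t,y,a)| ≤ w_R(t,|x−y|) for all t ∈ [0,T]\N_R, x,y ∈ B_R, a ∈ A. If H(t,x,p) := sup_{a∈A}(⟨p, f(t,x,a)⟩ − l(t,x,a)) and L(t,x,v) := sup_{p∈ℝⁿ}(⟨v,p⟩ − H(t,x,p)), then there exists λ : [0,T]×ℝⁿ → ℝ, measurable in t for all x and continuous in x for all t, such that L(t,x,v) ≤ λ(t,x) for every t ∈ [0,T], x ∈ ℝⁿ, v ∈ dom L(t,x,·), and |λ(t,x) − λ(t,y)| ≤ w_R(t,|x−y|) for every t ∈ [0,T]\N_R, x,y ∈ B_R, R > 0 (with the same moduli w_R). Moreover, if f and l are continuous, then λ is continuous. -/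
/-! The bound is `λ(t,x) = max_{a∈A} l(t,x,a)`. If `v` lies in the closed convex hull of
the velocity set `f(t,x,A)`, then `⟪v,p⟫ ≤ H(t,x,p) + λ(t,x)` for every `p`, so
`L(t,x,v) ≤ λ(t,x)`; otherwise a hyperplane strictly separates `v` from that hull and
`L(t,x,v) = +∞` along the normal ray. Being a maximum over a compact set, `λ` inherits the
continuity of `l` and its moduli `w_R`; measurability in `t` comes from writing the maximum over
a dense sequence of controls. -/

open Filter Topology MeasureTheory Set Metric
open scoped RealInnerProductSpace Pointwise

noncomputable section

abbrev Eucl (n : ℕ) := EuclideanSpace ℝ (Fin n)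

/-- Legendre–Fenchel transform in the last variable of a real-valued Hamiltonian:
`LFT H t x v = sup_p (⟪v,p⟫ − H t x p)`, with values in `EReal = ℝ ∪ {±∞}`. -/
def LFT {n : ℕ} (H : ℝ → Eucl n → Eucl n → ℝ) (t : ℝ) (x v : Eucl n) : EReal :=
  ⨆ p : Eucl n, ((⟪v, p⟫ - H t x p : ℝ) : EReal)

/-- Epigraph `E_L(t,x) = {(v,η) | L(t,x,v) ≤ η}` of the Lagrangian `L = LFT H`. -/
def epiL {n : ℕ} (H : ℝ → Eucl n → Eucl n → ℝ) (t : ℝ) (x : Eucl n) : Set (Eucl n × ℝ) :=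
  {q | LFT H t x q.1 ≤ (q.2 : EReal)}

/-- Legendre–Fenchel conjugate of an extended-real-valued function. -/
def eConj {n : ℕ} (φ : Eucl n → EReal) (v : Eucl n) : EReal :=
  ⨆ p : Eucl n, (((⟪v, p⟫ : ℝ) : EReal) - φ p)

/-- A modulus: `w(·,r)` measurable, `w(t,·)` nonnegative, nondecreasing, continuous,
subadditive with `w(t,0) = 0`. -/
def IsModulus (w : ℝ → ℝ → ℝ) : Prop :=
  (∀ r, Measurable fun t => w t r) ∧
  ∀ t, (∀ r, 0 ≤ w t r) ∧ Monotone (w t) ∧ Continuous (w t) ∧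
    (∀ a b : ℝ, 0 ≤ a → 0 ≤ b → w t (a + b) ≤ w t a + w t b) ∧ w t 0 = 0

/-- Convexity of an `EReal`-valued function. -/
def EConvex {F : Type*} [AddCommMonoid F] [Module ℝ F] (φ : F → EReal) : Prop :=
  ∀ v u : F, ∀ a b : ℝ, 0 ≤ a → 0 ≤ b → a + b = 1 →
    φ (a • v + b • u) ≤ (a : EReal) * φ v + (b : EReal) * φ u

/-- A proper extended-real-valued function: never `−∞` and not identically `+∞`. -/
def EProper {F : Type*} (φ : F → EReal) : Prop :=
  (∀ v, φ v ≠ ⊥) ∧ ∃ v, φ v ≠ ⊤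

section ImageSupremum

variable {α : Type*} {A : Set α}

lemma csSup_image_le_csSup_image_add (hA : A.Nonempty) {u v : α → ℝ}
    (hv : BddAbove (v '' A)) {ε : ℝ} (h : ∀ a ∈ A, u a ≤ v a + ε) :
    sSup (u '' A) ≤ sSup (v '' A) + ε :=
  csSup_le (hA.image u) <| forall_mem_image.2 fun a ha =>
    (h a ha).trans (add_le_add_left (le_csSup hv (mem_image_of_mem v ha)) ε)

lemma abs_csSup_image_sub_csSup_image_le (hA : A.Nonempty) {u v : α → ℝ}
    (hu : BddAbove (u '' A)) (hv : BddAbove (v '' A)) {ε : ℝ}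
    (h : ∀ a ∈ A, |u a - v a| ≤ ε) :
    |sSup (u '' A) - sSup (v '' A)| ≤ ε := by
  refine abs_sub_le_iff.2 ⟨?_, ?_⟩ <;> rw [sub_le_iff_le_add']
  · exact csSup_image_le_csSup_image_add hA hv fun a ha => by
      linarith [(abs_sub_le_iff.1 (h a ha)).1]
  · exact csSup_image_le_csSup_image_add hA hu fun a ha => by
      linarith [(abs_sub_le_iff.1 (h a ha)).2]

variable {β X : Type*} [ConditionallyCompleteLinearOrder β] [TopologicalSpace β]
  [OrderTopology β] [TopologicalSpace α] [TopologicalSpace X]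

lemma IsCompact.continuousOn_sSup_image (hA : IsCompact A) {S : Set X} {F : X → α → β}
    (hF : ContinuousOn (fun q : X × α => F q.1 q.2) (S ×ˢ A)) :
    ContinuousOn (fun x => sSup (F x '' A)) S := by
  have : CompactSpace A := isCompact_iff_compactSpace.1 hA
  have hF' : Continuous fun q : S × A => F q.1 q.2 :=
    hF.comp_continuous (continuous_subtype_val.prodMap continuous_subtype_val)
      fun q => ⟨q.1.2, q.2.2⟩
  rw [continuousOn_iff_continuous_domRestrict]
  convert isCompact_univ.continuous_sSup (f := fun (x : S) (a : A) => F x a) hF' using 2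
  rw [image_univ, ← image_eq_range]
  rfl

lemma DenseRange.ciSup_comp_eq_sSup_image {ι : Type*} {u : ι → A} (hu : DenseRange u)
    {g : α → β} (hg : ContinuousOn g A) :
    ⨆ i, g (u i) = sSup (g '' A) := by
  rw [sSup_image', ← iSup_range' (fun a : A => g a) u]
  exact hu.ciSup' (continuousOn_iff_continuous_domRestrict.1 hg)

end ImageSupremum

section FenchelConjugate

variable {E : Type*} [NormedAddCommGroup E] [InnerProductSpace ℝ E]

def fenchelConj (h : E → ℝ) (v : E) : EReal :=
  ⨆ p : E, ((⟪v, p⟫ - h p : ℝ) : EReal)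

lemma fenchelConj_le_of_mem_closure_convexHull {h : E → ℝ} {K : Set E} {M : ℝ}
    (hh : ∀ p, ∀ z ∈ K, ⟪p, z⟫ - M ≤ h p) {v : E}
    (hv : v ∈ closure (convexHull ℝ K)) :
    fenchelConj h v ≤ M := by
  refine iSup_le fun p => EReal.coe_le_coe_iff.2 ?_
  have hhalf : closure (convexHull ℝ K) ⊆ {z | ⟪p, z⟫ ≤ h p + M} :=
    closure_minimal
      (convexHull_min (fun z hz => show ⟪p, z⟫ ≤ h p + M by linarith [hh p z hz])
        (convex_halfSpace_le (innerₗ E p).isLinear _))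
      (isClosed_le (continuous_const.inner continuous_id) continuous_const)
  linarith [show ⟪p, v⟫ ≤ h p + M from hhalf hv, real_inner_comm p v]

lemma fenchelConj_eq_top_of_notMem_closure_convexHull [CompleteSpace E] {h : E → ℝ}
    {K : Set E} {m : ℝ} (hh : ∀ p s, (∀ z ∈ K, ⟪p, z⟫ ≤ s) → h p ≤ s - m) {v : E}
    (hv : v ∉ closure (convexHull ℝ K)) :
    fenchelConj h v = ⊤ := by
  obtain ⟨φ, s, hφK, hφv⟩ :=
    geometric_hahn_banach_closed_point (convex_convexHull ℝ K).closure isClosed_closure hv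
  set p := (InnerProductSpace.toDual ℝ E).symm φ
  have hp : ∀ z, ⟪p, z⟫ = φ z := fun z => InnerProductSpace.toDual_symm_apply
  have hray : ∀ r : ℝ, 0 ≤ r → r * (φ v - s) + m ≤ ⟪v, r • p⟫ - h (r • p) := by
    intro r hr
    have hK : ∀ z ∈ K, ⟪r • p, z⟫ ≤ r * s := fun z hz => by
      rw [real_inner_smul_left, hp]
      exact mul_le_mul_of_nonneg_left (hφK z (subset_closure (subset_convexHull ℝ K hz))).le hr
    rw [real_inner_smul_right, real_inner_comm, hp]
    linarith [hh _ _ hK]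
  have hlim : Tendsto (fun r => r * (φ v - s) + m) atTop atTop :=
    tendsto_atTop_add_const_right _ m (tendsto_id.atTop_mul_const (sub_pos.2 hφv))
  refine iSup_eq_top.2 fun b hb => ?_
  obtain ⟨r, hr, hrb⟩ :=
    ((eventually_ge_atTop 0).and (hlim.eventually_gt_atTop b.toReal)).exists
  refine ⟨r • p, (EReal.le_coe_toReal hb.ne).trans_lt (EReal.coe_lt_coe_iff.2 ?_)⟩
  linarith [hray r hr]

lemma fenchelConj_sSup_image_le_of_ne_top [CompleteSpace E] {α : Type*} [TopologicalSpace α]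
    {A : Set α} (hA : A.Nonempty) (hAc : IsCompact A) {F : α → E} {c : α → ℝ}
    (hF : ContinuousOn F A) (hc : ContinuousOn c A) {h : E → ℝ}
    (hh : ∀ p, h p = sSup ((fun a => ⟪p, F a⟫ - c a) '' A)) {v : E}
    (hv : fenchelConj h v ≠ ⊤) :
    fenchelConj h v ≤ sSup (c '' A) := by
  obtain rfl : h = _ := funext hh
  by_cases hvK : v ∈ closure (convexHull ℝ (F '' A))
  · refine fenchelConj_le_of_mem_closure_convexHull
      (fun p => forall_mem_image.2 fun a ha => ?_) hvK
    have hbdd : BddAbove ((fun a => ⟪p, F a⟫ - c a) '' A) :=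
      hAc.bddAbove_image (((continuous_const.inner continuous_id).comp_continuousOn hF).sub hc)
    linarith [le_csSup hbdd (mem_image_of_mem _ ha),
      le_csSup (hAc.bddAbove_image hc) (mem_image_of_mem c ha)]
  · refine absurd (fenchelConj_eq_top_of_notMem_closure_convexHull (m := sInf (c '' A))
      (fun p s hs => ?_) hvK) hv
    refine csSup_le (hA.image _) (forall_mem_image.2 fun a ha => ?_)
    linarith [hs _ (mem_image_of_mem F ha),
      csInf_le (hAc.bddBelow_image hc) (mem_image_of_mem c ha)]

end FenchelConjugate

theorem compact_representation_necessary_general (n m : ℕ) (T : ℝ)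
    (A : Set (Eucl m)) (hA : A.Nonempty) (hAc : IsCompact A)
    (f : ℝ → Eucl n → Eucl m → Eucl n) (l : ℝ → Eucl n → Eucl m → ℝ)
    (hlm : ∀ (x : Eucl n) (a : Eucl m), Measurable fun t => l t x a)
    (hfc : ∀ t ∈ Icc (0 : ℝ) T,
      ContinuousOn (fun q : Eucl n × Eucl m => f t q.1 q.2)
        ((univ : Set (Eucl n)) ×ˢ A))
    (hlc : ∀ t ∈ Icc (0 : ℝ) T,
      ContinuousOn (fun q : Eucl n × Eucl m => l t q.1 q.2)
        ((univ : Set (Eucl n)) ×ˢ A))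
    (w : ℝ → ℝ → ℝ → ℝ) (N : ℝ → Set ℝ)
    (hlw : ∀ R > (0 : ℝ), ∀ t ∈ Icc (0 : ℝ) T \ N R, ∀ x ∈ closedBall (0 : Eucl n) R,
      ∀ y ∈ closedBall (0 : Eucl n) R, ∀ a ∈ A,
      |l t x a - l t y a| ≤ w R t ‖x - y‖)
    (H : ℝ → Eucl n → Eucl n → ℝ)
    (hH : ∀ (t : ℝ) (x p : Eucl n),
      H t x p = sSup ((fun a => ⟪p, f t x a⟫ - l t x a) '' A)) :
    ∃ lam : ℝ → Eucl n → ℝ,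
      (∀ x : Eucl n, Measurable fun t => lam t x) ∧
      (∀ t ∈ Icc (0 : ℝ) T, Continuous fun x => lam t x) ∧
      -- L is bounded by λ on its effective domain
      (∀ t ∈ Icc (0 : ℝ) T, ∀ (x v : Eucl n),
        LFT H t x v ≠ ⊤ → LFT H t x v ≤ ((lam t x : ℝ) : EReal)) ∧
      -- λ has the same moduli of continuity as l
      (∀ R > (0 : ℝ), ∀ t ∈ Icc (0 : ℝ) T \ N R, ∀ x ∈ closedBall (0 : Eucl n) R,
        ∀ y ∈ closedBall (0 : Eucl n) R, |lam t x - lam t y| ≤ w R t ‖x - y‖) ∧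
      -- continuity of λ when f and l are continuous
      ((ContinuousOn (fun q : ℝ × Eucl n × Eucl m => f q.1 q.2.1 q.2.2)
          (Icc (0 : ℝ) T ×ˢ (univ : Set (Eucl n)) ×ˢ A) ∧
        ContinuousOn (fun q : ℝ × Eucl n × Eucl m => l q.1 q.2.1 q.2.2)
          (Icc (0 : ℝ) T ×ˢ (univ : Set (Eucl n)) ×ˢ A)) →
        ContinuousOn (fun q : ℝ × Eucl n => lam q.1 q.2)
          (Icc (0 : ℝ) T ×ˢ (univ : Set (Eucl n)))) := by
  have : Nonempty A := hA.to_subtype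
  obtain ⟨u, hu⟩ := TopologicalSpace.exists_dense_seq A
  have hslice :
      ∀ t ∈ Icc (0 : ℝ) T, ∀ x, ContinuousOn (f t x) A ∧ ContinuousOn (l t x) A :=
    fun t ht x =>
      ⟨(hfc t ht).comp (Continuous.prodMk_right x).continuousOn fun _ ha => ⟨trivial, ha⟩,
        (hlc t ht).comp (Continuous.prodMk_right x).continuousOn fun _ ha => ⟨trivial, ha⟩⟩
  have hlam : ∀ t ∈ Icc (0 : ℝ) T, ∀ x, ⨆ i, l t x (u i) = sSup (l t x '' A) :=
    fun t ht x => hu.ciSup_comp_eq_sSup_image (hslice t ht x).2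
  refine ⟨fun t x => ⨆ i, l t x (u i), fun x => Measurable.iSup fun i => hlm x (u i),
    fun t ht => ?_, fun t ht x v hv => ?_, fun R hR t ht x hx y hy => ?_, fun hcont => ?_⟩
  · simp only [hlam t ht]
    exact continuousOn_univ.1 (hAc.continuousOn_sSup_image (hlc t ht))
  · simp only [hlam t ht x]
    exact fenchelConj_sSup_image_le_of_ne_top hA hAc (hslice t ht x).1 (hslice t ht x).2
      (hH t x) hv
  · simp only [hlam t ht.1]
    exact abs_csSup_image_sub_csSup_image_le hA (hAc.bddAbove_image (hslice t ht.1 x).2)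
      (hAc.bddAbove_image (hslice t ht.1 y).2) (hlw R hR t ht x hx y hy)
  · refine (hAc.continuousOn_sSup_image (F := fun q : ℝ × Eucl n => l q.1 q.2) ?_).congr
      fun q (hq : q ∈ Icc (0 : ℝ) T ×ˢ univ) => hlam q.1 hq.1 q.2
    have hassoc : Continuous fun q : (ℝ × Eucl n) × Eucl m => (q.1.1, q.1.2, q.2) := by
      fun_prop
    exact hcont.2.comp hassoc.continuousOn
      fun q (hq : q ∈ (Icc (0 : ℝ) T ×ˢ univ) ×ˢ A) => ⟨hq.1.1, trivial, hq.2⟩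

/-- Theorem 3.2 of the paper: necessary condition for compact control
sets. If `(A, f, l)` is a regular representation with nonempty compact control set `A`
whose Lagrangian cost `l` is `w_R`-continuous in `x`, then the Lagrangian
`L = H*` of `H(t,x,p) = sup_{a∈A}(⟨p,f(t,x,a)⟩ − l(t,x,a))` is bounded on its effective
domain by a function `λ(t,x)`, `t`-measurable, `x`-continuous, with the same moduli `w_R`;
moreover `λ` is continuous when `f, l` are. -/
theorem compact_representation_necessary (n m : ℕ) (T : ℝ) (hT : 0 ≤ T)
    (A : Set (Eucl m)) (hA : A.Nonempty) (hAc : IsCompact A)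
    (f : ℝ → Eucl n → Eucl m → Eucl n) (l : ℝ → Eucl n → Eucl m → ℝ)
    (hfm : ∀ (x : Eucl n) (a : Eucl m), Measurable fun t => f t x a)
    (hlm : ∀ (x : Eucl n) (a : Eucl m), Measurable fun t => l t x a)
    (hfc : ∀ t ∈ Icc (0 : ℝ) T,
      ContinuousOn (fun q : Eucl n × Eucl m => f t q.1 q.2)
        ((univ : Set (Eucl n)) ×ˢ A))
    (hlc : ∀ t ∈ Icc (0 : ℝ) T,
      ContinuousOn (fun q : Eucl n × Eucl m => l t q.1 q.2)
        ((univ : Set (Eucl n)) ×ˢ A))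
    (w : ℝ → ℝ → ℝ → ℝ) (N : ℝ → Set ℝ)
    (hw : ∀ R > (0 : ℝ), IsModulus (w R))
    (hN : ∀ R > (0 : ℝ), volume (N R) = 0)
    (hlw : ∀ R > (0 : ℝ), ∀ t ∈ Icc (0 : ℝ) T \ N R, ∀ x ∈ closedBall (0 : Eucl n) R,
      ∀ y ∈ closedBall (0 : Eucl n) R, ∀ a ∈ A,
      |l t x a - l t y a| ≤ w R t ‖x - y‖)
    (H : ℝ → Eucl n → Eucl n → ℝ)
    (hH : ∀ (t : ℝ) (x p : Eucl n),
      H t x p = sSup ((fun a => ⟪p, f t x a⟫ - l t x a) '' A)) :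
    ∃ lam : ℝ → Eucl n → ℝ,
      (∀ x : Eucl n, Measurable fun t => lam t x) ∧
      (∀ t ∈ Icc (0 : ℝ) T, Continuous fun x => lam t x) ∧
      -- L is bounded by λ on its effective domain
      (∀ t ∈ Icc (0 : ℝ) T, ∀ (x v : Eucl n),
        LFT H t x v ≠ ⊤ → LFT H t x v ≤ ((lam t x : ℝ) : EReal)) ∧
      -- λ has the same moduli of continuity as l
      (∀ R > (0 : ℝ), ∀ t ∈ Icc (0 : ℝ) T \ N R, ∀ x ∈ closedBall (0 : Eucl n) R,
        ∀ y ∈ closedBall (0 : Eucl n) R, |lam t x - lam t y| ≤ w R t ‖x - y‖) ∧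
      -- continuity of λ when f and l are continuous
      ((ContinuousOn (fun q : ℝ × Eucl n × Eucl m => f q.1 q.2.1 q.2.2)
          (Icc (0 : ℝ) T ×ˢ (univ : Set (Eucl n)) ×ˢ A) ∧
        ContinuousOn (fun q : ℝ × Eucl n × Eucl m => l q.1 q.2.1 q.2.2)
          (Icc (0 : ℝ) T ×ˢ (univ : Set (Eucl n)) ×ˢ A)) →
        ContinuousOn (fun q : ℝ × Eucl n => lam q.1 q.2)
          (Icc (0 : ℝ) T ×ˢ (univ : Set (Eucl n)))) :=
  compact_representation_necessary_general n m T A hA hAc f l hlm hfc hlc w N hlw H hH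
end
end

section
/- Fix (t,x) ∈ [0,T]×ℝⁿ and suppose p ↦ H(t,x,p) is proper, convex and lower semicontinuous, and let L(t,x,·) = H*(t,x,·). Suppose λ(t,x) ∈ ℝ satisfies L(t,x,v) ≤ λ(t,x) for all v ∈ dom L(t,x,·). Let B be the closed unit ball of ℝ^{n+1} and let e : B → ℝⁿ×ℝ satisfy E_{λ,L}(t,x) ⊂ e(t,x,B) ⊂ E_L(t,x), where E_{λ,L}(t,x) := {(v,η) : L(t,x,v) ≤ η ≤ λ(t,x)} and E_L(t,x) := {(v,η) : L(t,x,v) ≤ η}. If e(t,x,a) = (f(t,x,a), l(t,x,a)) for all a ∈ B, then H(t,x,p) = sup_{a∈B}(⟨p, f(t,x,a)⟩ − l(t,x,a)) for all p ∈ ℝⁿ, and f(t,x,B) = dom L(t,x,·). -/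
open Filter Topology MeasureTheory Set Metric
open scoped RealInnerProductSpace Pointwise

noncomputable section

/-! The representation `H = sup_{a ∈ B} (⟪·, f a⟫ - l a)` is the Fenchel–Moreau identity
`H = H**` with the supremum defining `H** = L*` restricted to the epigraph of `L`: points above
`λ` never matter because `L ≤ λ` on its domain, and `e(B)` contains every point of the epigraph
below `λ`. Fenchel–Moreau itself comes from separating a point below the graph of `H` from its
closed convex epigraph; when the separating hyperplane is vertical it is tilted by a fixed affine
minorant of `H`, which exists because `H` is finite somewhere. -/

section AffineMinorant

variable {E : Type*}

def realEpigraph (φ : E → EReal) : Set (E × ℝ) :=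
  {q | φ q.1 ≤ q.2}

variable {φ : E → EReal}

theorem separation_slope_nonneg {g : E → ℝ} {s u : ℝ} {p₁ : E} (h₁ : φ p₁ ≠ ⊤)
    (hsep : ∀ p (y : ℝ), φ p ≤ y → u < g p + y * s) : 0 ≤ s := by
  by_contra! hs
  set y := max (φ p₁).toReal ((u - g p₁) / s)
  have hy : φ p₁ ≤ y := (EReal.le_coe_toReal h₁).trans (by exact_mod_cast le_max_left _ _)
  have : y * s ≤ (u - g p₁) / s * s := mul_le_mul_of_nonpos_right (le_max_right _ _) hs.le
  rw [div_mul_cancel₀ _ hs.ne] at this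
  linarith [hsep p₁ y hy]

theorem EConvex.convex_realEpigraph [AddCommGroup E] [Module ℝ E] (hc : EConvex φ) :
    Convex ℝ (realEpigraph φ) := by
  rintro ⟨p₁, y₁⟩ h₁ ⟨p₂, y₂⟩ h₂ a b ha hb hab
  calc φ (a • p₁ + b • p₂) ≤ (a : EReal) * φ p₁ + (b : EReal) * φ p₂ := hc p₁ p₂ a b ha hb hab
    _ ≤ (a : EReal) * y₁ + (b : EReal) * y₂ :=
      add_le_add (mul_le_mul_of_nonneg_left h₁ (by exact_mod_cast ha))
        (mul_le_mul_of_nonneg_left h₂ (by exact_mod_cast hb))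
    _ = ((a • (p₁, y₁) + b • (p₂, y₂)).2 : EReal) := by simp

theorem LowerSemicontinuous.isClosed_realEpigraph [TopologicalSpace E]
    (hl : LowerSemicontinuous φ) :
    IsClosed (realEpigraph φ) :=
  hl.isClosed_epigraph.preimage
    (continuous_fst.prodMk (continuous_coe_real_ereal.comp continuous_snd))

variable [TopologicalSpace E] [AddCommGroup E] [Module ℝ E]

def IsAffineMinorant (φ : E → EReal) (g : StrongDual ℝ E) (c : ℝ) : Prop :=
  ∀ p, ((g p - c : ℝ) : EReal) ≤ φ p

theorem exists_isAffineMinorant_of_separation {g : StrongDual ℝ E} {s u r : ℝ} {p₀ : E}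
    (hs : 0 < s) (h₀ : g p₀ + r * s < u) (hsep : ∀ p (y : ℝ), φ p ≤ y → u < g p + y * s) :
    ∃ (g' : StrongDual ℝ E) (c : ℝ), r < g' p₀ - c ∧ IsAffineMinorant φ g' c := by
  have hval : ∀ p, (-s⁻¹ • g) p - -u / s = (u - g p) / s := fun p => by
    simp only [smul_apply, smul_eq_mul]
    field_simp
    ring
  refine ⟨-s⁻¹ • g, -u / s, ?_, fun p => ?_⟩
  · rw [hval, lt_div_iff₀ hs]
    linarith
  · rw [hval, ← EReal.le_of_forall_lt_iff_le]
    intro z hz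
    have := hsep p z hz.le
    exact_mod_cast (div_le_iff₀ hs).2 (by linarith)

theorem IsAffineMinorant.exists_gt_of_vertical_separation {g₀ : StrongDual ℝ E} {c₀ : ℝ}
    (h₀ : IsAffineMinorant φ g₀ c₀) {g : StrongDual ℝ E} {u : ℝ} {p₀ : E} (hp₀ : g p₀ < u)
    (hdom : ∀ p, φ p ≠ ⊤ → u < g p) (r : ℝ) :
    ∃ (g' : StrongDual ℝ E) (c : ℝ), r < g' p₀ - c ∧ IsAffineMinorant φ g' c := by
  set t := (|r - (g₀ p₀ - c₀)| + 1) / (u - g p₀)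
  have ht : 0 ≤ t := div_nonneg (by positivity) (sub_pos.2 hp₀).le
  have hval : ∀ p, (g₀ - t • g) p - (c₀ - t * u) = g₀ p - c₀ + t * (u - g p) := fun p => by
    simp only [sub_apply, smul_apply, smul_eq_mul]
    ring
  refine ⟨g₀ - t • g, c₀ - t * u, ?_, fun p => ?_⟩
  · rw [hval, div_mul_cancel₀ _ (sub_pos.2 hp₀).ne']
    linarith [le_abs_self (r - (g₀ p₀ - c₀))]
  · rcases eq_or_ne (φ p) ⊤ with htop | hfin
    · simp [htop]
    · refine le_trans ?_ (h₀ p)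
      rw [hval]
      exact_mod_cast add_le_of_nonpos_right
        (mul_nonpos_of_nonneg_of_nonpos ht (sub_nonpos.2 (hdom p hfin).le))

variable [IsTopologicalAddGroup E] [ContinuousSMul ℝ E] [LocallyConvexSpace ℝ E]

theorem EConvex.exists_separation_of_lt (hc : EConvex φ) (hl : LowerSemicontinuous φ) {p₀ : E}
    {r : ℝ} (hr : (r : EReal) < φ p₀) :
    ∃ (g : StrongDual ℝ E) (s u : ℝ), g p₀ + r * s < u ∧
      ∀ p (y : ℝ), φ p ≤ y → u < g p + y * s := by
  obtain ⟨F, u, hF₀, hF⟩ := geometric_hahn_banach_point_closed hc.convex_realEpigraph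
    hl.isClosed_realEpigraph (x := (p₀, r)) hr.not_ge
  have hsplit : ∀ p (y : ℝ), F (p, y) = F.comp (.inl ℝ E ℝ) p + y * F (0, 1) := fun p y => by
    rw [← smul_eq_mul, ← map_smul, ContinuousLinearMap.comp_apply, ← map_add]; simp
  refine ⟨F.comp (.inl ℝ E ℝ), F (0, 1), u, hsplit p₀ r ▸ hF₀, fun p y hy => ?_⟩
  exact hsplit p y ▸ hF (p, y) hy

theorem EConvex.exists_isAffineMinorant (hp : EProper φ) (hc : EConvex φ)
    (hl : LowerSemicontinuous φ) : ∃ (g : StrongDual ℝ E) (c : ℝ), IsAffineMinorant φ g c := by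
  obtain ⟨p₁, hp₁⟩ := hp.2
  set y₁ := (φ p₁).toReal
  have hy₁ : φ p₁ = y₁ := (EReal.coe_toReal hp₁ (hp.1 p₁)).symm
  obtain ⟨g, s, u, h₀, hsep⟩ :=
    hc.exists_separation_of_lt hl (r := y₁ - 1) (by rw [hy₁]; exact_mod_cast sub_one_lt y₁)
  have hs : 0 < s := by linarith [hsep p₁ y₁ hy₁.le]
  obtain ⟨g', c, -, hmin⟩ := exists_isAffineMinorant_of_separation hs h₀ hsep
  exact ⟨g', c, hmin⟩

theorem EConvex.exists_isAffineMinorant_gt (hp : EProper φ) (hc : EConvex φ)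
    (hl : LowerSemicontinuous φ) {p₀ : E} {r : ℝ} (hr : (r : EReal) < φ p₀) :
    ∃ (g : StrongDual ℝ E) (c : ℝ), r < g p₀ - c ∧ IsAffineMinorant φ g c := by
  obtain ⟨g, s, u, h₀, hsep⟩ := hc.exists_separation_of_lt hl hr
  obtain ⟨p₁, hp₁⟩ := hp.2
  rcases (separation_slope_nonneg hp₁ hsep).lt_or_eq with hs | rfl
  · exact exists_isAffineMinorant_of_separation hs h₀ hsep
  · obtain ⟨g₀, c₀, hmin⟩ := hc.exists_isAffineMinorant hp hl
    refine hmin.exists_gt_of_vertical_separation (by simpa using h₀) (fun p hp => ?_) r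
    simpa using hsep p _ (EReal.le_coe_toReal hp)

end AffineMinorant

section FenchelMoreau

variable {n : ℕ} {φ : Eucl n → EReal}

theorem IsAffineMinorant.eConj_le {g : StrongDual ℝ (Eucl n)} {c : ℝ}
    (h : IsAffineMinorant φ g c) :
    eConj φ ((InnerProductSpace.toDual ℝ (Eucl n)).symm g) ≤ c := by
  refine iSup_le fun p => EReal.sub_le_of_le_add ?_
  rw [InnerProductSpace.toDual_symm_apply, add_comm,
    ← EReal.sub_le_iff_le_add (by simp) (by simp)]
  exact h p

theorem IsAffineMinorant.le_eConj_eConj {g : StrongDual ℝ (Eucl n)} {c : ℝ}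
    (h : IsAffineMinorant φ g c) (p : Eucl n) :
    ((g p - c : ℝ) : EReal) ≤ eConj (eConj φ) p := by
  set q := (InnerProductSpace.toDual ℝ (Eucl n)).symm g
  calc ((g p - c : ℝ) : EReal) = ((⟪p, q⟫ : ℝ) : EReal) - (c : EReal) := by
        rw [real_inner_comm, InnerProductSpace.toDual_symm_apply, EReal.coe_sub]
    _ ≤ ((⟪p, q⟫ : ℝ) : EReal) - eConj φ q := EReal.sub_le_sub le_rfl h.eConj_le
    _ ≤ eConj (eConj φ) p := le_iSup (fun v => ((⟪p, v⟫ : ℝ) : EReal) - eConj φ v) q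

theorem eConj_eConj_le {p : Eucl n} (hp : φ p ≠ ⊥) : eConj (eConj φ) p ≤ φ p := by
  rcases eq_or_ne (φ p) ⊤ with htop | hfin
  · simp [htop]
  refine iSup_le fun v => ?_
  have hv : ((⟪v, p⟫ : ℝ) : EReal) - φ p ≤ eConj φ v :=
    le_iSup (fun p => ((⟪v, p⟫ : ℝ) : EReal) - φ p) p
  rw [EReal.sub_le_iff_le_add (.inl hp) (.inl hfin)] at hv
  rw [EReal.sub_le_iff_le_add (.inr hfin) (.inr hp), add_comm, real_inner_comm]
  exact hv

theorem EConvex.eConj_eConj_eq (hp : EProper φ) (hc : EConvex φ) (hl : LowerSemicontinuous φ)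
    (p : Eucl n) : eConj (eConj φ) p = φ p := by
  refine le_antisymm (eConj_eConj_le (hp.1 p)) (EReal.ge_of_forall_gt_iff_ge.1 fun r hr => ?_)
  obtain ⟨g, c, hgc, hmin⟩ := hc.exists_isAffineMinorant_gt hp hl hr
  exact (EReal.coe_le_coe_iff.2 hgc.le).trans (hmin.le_eConj_eConj p)

theorem eConj_ne_bot (h : ∃ p, φ p ≠ ⊤) (v : Eucl n) : eConj φ v ≠ ⊥ := by
  obtain ⟨p, hp⟩ := h
  refine ne_bot_of_le_ne_bot ?_ (le_iSup (fun p => ((⟪v, p⟫ : ℝ) : EReal) - φ p) p)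
  generalize φ p = y at hp ⊢
  induction y using EReal.rec <;> simp_all [← EReal.coe_sub]

end FenchelMoreau

section Representation

variable {n : ℕ} {L : Eucl n → EReal} {lam : ℝ} {ι : Type*} {e : ι → Eucl n × ℝ}

theorem iSup_eq_eConj_of_epigraph_squeeze (hbot : ∀ v, L v ≠ ⊥)
    (hbound : ∀ v, L v ≠ ⊤ → L v ≤ lam)
    (hsub : {q : Eucl n × ℝ | L q.1 ≤ q.2 ∧ q.2 ≤ lam} ⊆ range e)
    (hsup : range e ⊆ {q : Eucl n × ℝ | L q.1 ≤ q.2}) (p : Eucl n) :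
    ⨆ i, ((⟪p, (e i).1⟫ - (e i).2 : ℝ) : EReal) = eConj L p := by
  refine le_antisymm (iSup_le fun i => ?_) (iSup_le fun v => ?_)
  · calc ((⟪p, (e i).1⟫ - (e i).2 : ℝ) : EReal)
        ≤ ((⟪p, (e i).1⟫ : ℝ) : EReal) - L (e i).1 := by
          rw [EReal.coe_sub]
          exact EReal.sub_le_sub le_rfl (hsup (mem_range_self i))
      _ ≤ eConj L p := le_iSup (fun v => ((⟪p, v⟫ : ℝ) : EReal) - L v) (e i).1
  · rcases eq_or_ne (L v) ⊤ with htop | hfin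
    · simp [htop]
    obtain ⟨i, hi⟩ := hsub (show (v, (L v).toReal) ∈ _ from
      ⟨EReal.le_coe_toReal hfin, EReal.toReal_le_toReal (hbound v hfin) (hbot v) (by simp)⟩)
    refine le_of_eq_of_le ?_ (le_iSup _ i)
    rw [hi, EReal.coe_sub, EReal.coe_toReal hfin (hbot v)]

theorem range_fst_eq_dom_of_epigraph_squeeze (hbound : ∀ v, L v ≠ ⊤ → L v ≤ lam)
    (hsub : {q : Eucl n × ℝ | L q.1 ≤ q.2 ∧ q.2 ≤ lam} ⊆ range e)
    (hsup : range e ⊆ {q : Eucl n × ℝ | L q.1 ≤ q.2}) :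
    range (fun i => (e i).1) = {v | L v ≠ ⊤} := by
  refine Subset.antisymm ?_ fun v hv => ?_
  · rintro _ ⟨i, rfl⟩
    exact ne_top_of_le_ne_top (EReal.coe_ne_top _) (hsup (mem_range_self i))
  · obtain ⟨i, hi⟩ := hsub (show (v, lam) ∈ _ from ⟨hbound v hv, le_rfl⟩)
    exact ⟨i, congrArg Prod.fst hi⟩

end Representation

/-- Proposition 5.7 of the paper. Fix `(t,x)` and write
`Hx := H(t,x,·)`, proper, convex, lower semicontinuous, with `L = Hx*` bounded by `λ` on
its effective domain. If `e : B → ℝⁿ×ℝ` (with `B` the closed unit ball of `ℝ^{n+1}`)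
satisfies `E_{λ,L} ⊆ e(B) ⊆ E_L` and `e a = (f a, l a)`, then
`Hx p = sup_{a∈B}(⟨p, f a⟩ − l a)` and `f(B) = dom L`. -/
theorem squeezed_parametrization_represents (n : ℕ)
    (Hx : Eucl n → EReal)
    (hp : EProper Hx) (hc : EConvex Hx) (hl : LowerSemicontinuous Hx)
    (lam : ℝ)
    (hbound : ∀ v : Eucl n, eConj Hx v ≠ ⊤ → eConj Hx v ≤ ((lam : ℝ) : EReal))
    (e : Eucl (n + 1) → Eucl n × ℝ)
    (he1 : {q : Eucl n × ℝ | eConj Hx q.1 ≤ (q.2 : EReal) ∧ q.2 ≤ lam} ⊆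
      e '' closedBall (0 : Eucl (n + 1)) 1)
    (he2 : e '' closedBall (0 : Eucl (n + 1)) 1 ⊆
      {q : Eucl n × ℝ | eConj Hx q.1 ≤ (q.2 : EReal)}) :
    (∀ p : Eucl n,
      Hx p = ⨆ a : closedBall (0 : Eucl (n + 1)) 1,
        ((⟪p, (e a).1⟫ - (e a).2 : ℝ) : EReal)) ∧
    (fun a => (e a).1) '' closedBall (0 : Eucl (n + 1)) 1 =
      {v : Eucl n | eConj Hx v ≠ ⊤} := by
  rw [image_eq_range] at he1 he2
  refine ⟨fun p => ?_, ?_⟩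
  · rw [iSup_eq_eConj_of_epigraph_squeeze (eConj_ne_bot hp.2) hbound he1 he2,
      hc.eConj_eConj_eq hp hl]
  · rw [image_eq_range]
    exact range_fst_eq_dom_of_epigraph_squeeze hbound he1 he2
end
end
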